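/- arXiv:1910.07944 — 6 statements merged into one kernel-verified Lean document; each statement's English description precedes it below -/
import Mathlib

section
/- Let G be a finite simple graph satisfying: (i) G contains no triangle (no three mutually adjacent vertices); (ii) for every set A of four vertices inducing a P4 in G, at most one vertex outside A has a neighbor in A (i.e., |P(A)| ≤ 1); and (iii) for every set A of four vertices inducing a P4 in G, no vertex of P(A) is adjacent to a vertex of I(A). Then every connected component of G with at least 6 vertices is a biclique (a complete bipartite graph with both sides nonempty). -/
open SimpleGraph

/-- The graph `G △ F`: edge set is the symmetric difference of `G`'s edge set and `F`. -/
def editGraph {V : Type*} (G : SimpleGraph V) (F : Set (Sym2 V)) : SimpleGraph V :=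
  SimpleGraph.fromEdgeSet (symmDiff G.edgeSet F)

/-- The set `C` is a biclique in `G`: it splits into two nonempty disjoint independent
sets with all edges in between. -/
def IsBicliqueOn {V : Type*} (G : SimpleGraph V) (C : Set V) : Prop :=
  ∃ V1 V2 : Set V, V1 ∪ V2 = C ∧ Disjoint V1 V2 ∧ V1.Nonempty ∧ V2.Nonempty ∧
    (∀ a ∈ V1, ∀ b ∈ V1, ¬ G.Adj a b) ∧
    (∀ a ∈ V2, ∀ b ∈ V2, ¬ G.Adj a b) ∧
    (∀ a ∈ V1, ∀ b ∈ V2, G.Adj a b)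

/-- `G` is a bicluster graph: every connected component with at least two vertices
is a biclique. -/
def IsBiclusterGraph {V : Type*} (G : SimpleGraph V) : Prop :=
  ∀ v : V, 2 ≤ ({u | G.Reachable v u}).ncard → IsBicliqueOn G {u | G.Reachable v u}

/-- The four (distinct) vertices `a, b, c, d` induce a path `a - b - c - d` in `G`. -/
def InducesP4 {V : Type*} (G : SimpleGraph V) (a b c d : V) : Prop :=
  a ≠ b ∧ a ≠ c ∧ a ≠ d ∧ b ≠ c ∧ b ≠ d ∧ c ≠ d ∧
  G.Adj a b ∧ G.Adj b c ∧ G.Adj c d ∧ ¬ G.Adj a c ∧ ¬ G.Adj b d ∧ ¬ G.Adj a d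

theorem biclique_components_of_large
    {V : Type*} [Fintype V] (G : SimpleGraph V)
    (h1 : ∀ u v w : V, ¬ (G.Adj u v ∧ G.Adj v w ∧ G.Adj u w))
    (h2 : ∀ a b c d : V, InducesP4 G a b c d →
      ({v | v ∉ ({a, b, c, d} : Set V) ∧
        ∃ w ∈ ({a, b, c, d} : Set V), G.Adj v w}).ncard ≤ 1)
    (h3 : ∀ a b c d : V, InducesP4 G a b c d →
      ∀ p i : V, p ∉ ({a, b, c, d} : Set V) → i ∉ ({a, b, c, d} : Set V) →
        (∃ w ∈ ({a, b, c, d} : Set V), G.Adj p w) →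
        (∀ w ∈ ({a, b, c, d} : Set V), ¬ G.Adj i w) → ¬ G.Adj p i)
    (v : V) (hv : 6 ≤ ({u | G.Reachable v u}).ncard) :
    IsBicliqueOn G {u | G.Reachable v u} := by
  classical
  -- Step 1: no induced P4 whose first vertex is reachable from v.
  have noP4 : ∀ a b c d : V, InducesP4 G a b c d → G.Reachable v a → False := by
    intro a b c d hp hra
    set A : Set V := ({a, b, c, d} : Set V) with hA
    set P : Set V := {x | x ∉ ({a, b, c, d} : Set V) ∧
        ∃ w ∈ ({a, b, c, d} : Set V), G.Adj x w} with hPdef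
    have hPcard : P.ncard ≤ 1 := h2 a b c d hp
    have step : ∀ x z : V, x ∈ A ∪ P → G.Adj x z → z ∈ A ∪ P := by
      intro x z hx hxz
      by_cases hzA : z ∈ A
      · exact Or.inl hzA
      by_cases hzP : z ∈ P
      · exact Or.inr hzP
      exfalso
      have hznbr : ∀ w ∈ A, ¬ G.Adj z w := by
        intro w hw hadj
        exact hzP ⟨hzA, w, hw, hadj⟩
      rcases hx with hxA | hxP
      · exact hznbr x hxA hxz.symm
      · exact h3 a b c d hp x z hxP.1 hzA hxP.2 hznbr hxz
    have key : ∀ (x u : V) (w : G.Walk x u), x ∈ A ∪ P → u ∈ A ∪ P := by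
      intro x u w
      induction w with
      | nil => exact id
      | cons h p ih => intro hx; exact ih (step _ _ hx h)
    have hsub : {u | G.Reachable v u} ⊆ A ∪ P := by
      intro u hu
      obtain ⟨w⟩ := (hra.symm.trans hu : G.Reachable a u)
      exact key a u w (Or.inl (by simp [hA]))
    have h4 : A.ncard ≤ 4 := by
      have e1 : A.ncard ≤ ({b, c, d} : Set V).ncard + 1 := Set.ncard_insert_le _ _
      have e2 : ({b, c, d} : Set V).ncard ≤ ({c, d} : Set V).ncard + 1 :=
        Set.ncard_insert_le _ _
      have e3 : ({c, d} : Set V).ncard ≤ ({d} : Set V).ncard + 1 := Set.ncard_insert_le _ _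
      have e4 : ({d} : Set V).ncard = 1 := Set.ncard_singleton d
      omega
    have h5 : ({u | G.Reachable v u}).ncard ≤ 5 := by
      calc ({u | G.Reachable v u}).ncard ≤ (A ∪ P).ncard :=
            Set.ncard_le_ncard hsub (Set.toFinite _)
        _ ≤ A.ncard + P.ncard := Set.ncard_union_le _ _
        _ ≤ 5 := by omega
    omega
  -- Step 2: find a neighbor y of v.
  have hv2 : 1 < ({u | G.Reachable v u}).ncard := by omega
  obtain ⟨p, q, hp, hq, hpq⟩ := (Set.one_lt_ncard_iff (Set.toFinite _)).mp hv2
  have hex : ∃ u, G.Reachable v u ∧ u ≠ v := by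
    by_cases hpv : p = v
    · exact ⟨q, hq, fun h => hpq (hpv.trans h.symm)⟩
    · exact ⟨p, hp, hpv⟩
  obtain ⟨u₀, hru₀, hu₀ne⟩ := hex
  have hy : ∃ y : V, G.Adj v y := by
    obtain ⟨w⟩ := hru₀
    cases w with
    | nil => exact absurd rfl hu₀ne
    | cons h p => exact ⟨_, h⟩
  obtain ⟨y, hvy⟩ := hy
  -- Step 3: every reachable vertex is adjacent to y or to v.
  have step2 : ∀ x z : V, G.Reachable v x → G.Adj x z →
      (G.Adj x y ∨ G.Adj x v) → (G.Adj z y ∨ G.Adj z v) := by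
    intro x z hrx hxz hx
    by_contra hcon
    push_neg at hcon
    obtain ⟨hzy, hzv⟩ := hcon
    have hrz : G.Reachable v z := hrx.trans hxz.reachable
    rcases hx with hxy | hxv
    · have hxv' : ¬ G.Adj x v := fun h => h1 x v y ⟨h, hvy, hxy⟩
      have hxney : x ≠ y := G.ne_of_adj hxy
      have hxnev : x ≠ v := by rintro rfl; exact hzv hxz.symm
      have hzney : z ≠ y := by rintro rfl; exact hzv hvy.symm
      have hznev : z ≠ v := by rintro rfl; exact hzy hvy
      have hznex : z ≠ x := (G.ne_of_adj hxz).symm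
      have hynv : y ≠ v := fun h => G.irrefl (h ▸ hvy)
      exact noP4 z x y v
        ⟨hznex, hzney, hznev, hxney, hxnev, hynv,
          hxz.symm, hxy, hvy.symm, hzy, hxv', hzv⟩ hrz
    · have hxy' : ¬ G.Adj x y := fun h => h1 x y v ⟨h, hvy.symm, hxv⟩
      have hxnev : x ≠ v := G.ne_of_adj hxv
      have hxney : x ≠ y := by rintro rfl; exact hzy hxz.symm
      have hznev : z ≠ v := by rintro rfl; exact hzy hvy
      have hzney : z ≠ y := by rintro rfl; exact hzv hvy.symm
      have hznex : z ≠ x := (G.ne_of_adj hxz).symm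
      have hvney : v ≠ y := G.ne_of_adj hvy
      exact noP4 z x v y
        ⟨hznex, hznev, hzney, hxnev, hxney, hvney,
          hxz.symm, hxv, hvy, hzv, hxy', hzy⟩ hrz
  have key2 : ∀ (x u : V) (w : G.Walk x u), G.Reachable v x →
      (G.Adj x y ∨ G.Adj x v) → (G.Adj u y ∨ G.Adj u v) := by
    intro x u w
    induction w with
    | nil => exact fun _ h => h
    | cons h p ih =>
      intro hrx hx
      exact ih (hrx.trans h.reachable) (step2 _ _ hrx h hx)
  -- Step 4: assemble the biclique.
  refine ⟨{u | G.Reachable v u ∧ G.Adj u y}, {u | G.Reachable v u ∧ G.Adj u v},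
    ?_, ?_, ?_, ?_, ?_, ?_, ?_⟩
  · ext u
    simp only [Set.mem_union, Set.mem_setOf_eq]
    constructor
    · rintro (⟨h, _⟩ | ⟨h, _⟩) <;> exact h
    · intro hu
      have hu' := hu
      obtain ⟨w⟩ := hu'
      rcases key2 v u w (Reachable.refl v) (Or.inl hvy) with h | h
      · exact Or.inl ⟨hu, h⟩
      · exact Or.inr ⟨hu, h⟩
  · rw [Set.disjoint_left]
    rintro u ⟨_, huy⟩ ⟨_, huv⟩
    exact h1 u v y ⟨huv, hvy, huy⟩
  · exact ⟨v, Reachable.refl v, hvy⟩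
  · exact ⟨y, hvy.reachable, hvy.symm⟩
  · rintro a ⟨_, hay⟩ b ⟨_, hby⟩ hab
    exact h1 a b y ⟨hab, hby, hay⟩
  · rintro a ⟨_, hav⟩ b ⟨_, hbv⟩ hab
    exact h1 a b v ⟨hab, hbv, hav⟩
  · rintro a ⟨hra, hay⟩ b ⟨hrb, hbv⟩
    by_contra hab
    have haneb : a ≠ b := by rintro rfl; exact h1 a v y ⟨hbv, hvy, hay⟩
    have hanev : a ≠ v := by rintro rfl; exact hab hbv.symm
    have hbney : b ≠ y := by rintro rfl; exact hab hay
    have haney : a ≠ y := G.ne_of_adj hay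
    have hbnev : b ≠ v := G.ne_of_adj hbv
    have hynev : y ≠ v := (G.ne_of_adj hvy).symm
    have hav' : ¬ G.Adj a v := fun h => h1 a v y ⟨h, hvy, hay⟩
    have hyb' : ¬ G.Adj y b := fun h => h1 y b v ⟨h, hbv, hvy.symm⟩
    exact noP4 a y v b
      ⟨haney, hanev, haneb, hynev, fun h => hbney h.symm, fun h => hbnev h.symm,
        hay, hvy.symm, hbv.symm, hav', hyb', hab⟩ hra
end

section
/- Let G be a connected finite simple graph with at least 6 vertices satisfying: (i) G contains no triangle; (ii) for every set A of four vertices inducing a P4 in G, at most one vertex outside A has a neighbor in A; and (iii) for every set A of four vertices inducing a P4 in G, no vertex of P(A) is adjacent to a vertex of I(A). Then the complement graph of G is disconnected. -/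
open SimpleGraph

/-- A set closed under adjacency absorbs walks. -/
lemma mem_of_walk_closed {V : Type*} {G : SimpleGraph V} {M : Set V}
    (hM : ∀ ⦃x y : V⦄, x ∈ M → G.Adj x y → y ∈ M) :
    ∀ {u w : V}, G.Walk u w → u ∈ M → w ∈ M := by
  intro u w p
  induction p with
  | nil => exact id
  | cons h _ ih => exact fun hu => ih (hM hu h)

theorem complement_disconnected
    {V : Type*} [Fintype V] (G : SimpleGraph V)
    (hconn : G.Connected) (hcard : 6 ≤ Fintype.card V)
    (h1 : ∀ u v w : V, ¬ (G.Adj u v ∧ G.Adj v w ∧ G.Adj u w))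
    (h2 : ∀ a b c d : V, InducesP4 G a b c d →
      ({v | v ∉ ({a, b, c, d} : Set V) ∧
        ∃ w ∈ ({a, b, c, d} : Set V), G.Adj v w}).ncard ≤ 1)
    (h3 : ∀ a b c d : V, InducesP4 G a b c d →
      ∀ p i : V, p ∉ ({a, b, c, d} : Set V) → i ∉ ({a, b, c, d} : Set V) →
        (∃ w ∈ ({a, b, c, d} : Set V), G.Adj p w) →
        (∀ w ∈ ({a, b, c, d} : Set V), ¬ G.Adj i w) → ¬ G.Adj p i) :
    ¬ (Gᶜ).Connected := by
  intro hcompl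
  -- Step 1: G has no induced P4.
  have hnoP4 : ∀ a b c d : V, ¬ InducesP4 G a b c d := by
    intro a b c d hP4
    -- I(A) is closed under adjacency
    have hIclosed : ∀ ⦃x y : V⦄,
        x ∈ {x : V | x ∉ ({a, b, c, d} : Set V) ∧ ∀ w ∈ ({a, b, c, d} : Set V), ¬ G.Adj x w} →
        G.Adj x y →
        y ∈ {x : V | x ∉ ({a, b, c, d} : Set V) ∧ ∀ w ∈ ({a, b, c, d} : Set V), ¬ G.Adj x w} := by
      intro x y hx hxy
      have hyS : y ∉ ({a, b, c, d} : Set V) := fun hyS => hx.2 y hyS hxy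
      refine ⟨hyS, fun w hw hadj => ?_⟩
      exact h3 a b c d hP4 y x hyS hx.1 ⟨w, hw, hadj⟩ hx.2 hxy.symm
    -- I(A) is empty
    have hIempty : ∀ x : V, x ∉ ({a, b, c, d} : Set V) →
        ¬ (∀ w ∈ ({a, b, c, d} : Set V), ¬ G.Adj x w) := by
      intro x hxS hxI
      obtain ⟨p⟩ := hconn.preconnected x a
      have ha := mem_of_walk_closed hIclosed p ⟨hxS, hxI⟩
      exact ha.1 (by simp)
    -- everything is in A ∪ P(A)
    have hsub : (Set.univ : Set V) ⊆ ({a, b, c, d} : Set V) ∪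
        {v : V | v ∉ ({a, b, c, d} : Set V) ∧ ∃ w ∈ ({a, b, c, d} : Set V), G.Adj v w} := by
      intro x _
      by_cases hxS : x ∈ ({a, b, c, d} : Set V)
      · exact Or.inl hxS
      · refine Or.inr ⟨hxS, ?_⟩
        by_contra hnb
        exact hIempty x hxS (fun w hw hadj => hnb ⟨w, hw, hadj⟩)
    have hP := h2 a b c d hP4
    have hS4 : ({a, b, c, d} : Set V).ncard ≤ 4 := by
      have t1 := Set.ncard_insert_le a ({b, c, d} : Set V)
      have t2 := Set.ncard_insert_le b ({c, d} : Set V)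
      have t3 := Set.ncard_insert_le c ({d} : Set V)
      have t4 : ({d} : Set V).ncard = 1 := Set.ncard_singleton d
      omega
    have hle := Set.ncard_le_ncard hsub (Set.toFinite _)
    have hun := Set.ncard_union_le ({a, b, c, d} : Set V)
      {v : V | v ∉ ({a, b, c, d} : Set V) ∧ ∃ w ∈ ({a, b, c, d} : Set V), G.Adj v w}
    have huniv : (Set.univ : Set V).ncard = Fintype.card V := by
      rw [Set.ncard_univ, Nat.card_eq_fintype_card]
    omega
  -- Step 2: pick v and a neighbor n
  have hnV : Nonempty V := Fintype.card_pos_iff.mp (by omega)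
  obtain ⟨v⟩ := hnV
  obtain ⟨u, hu⟩ := Fintype.exists_ne_of_one_lt_card (by omega) v
  obtain ⟨p0⟩ := hconn.preconnected v u
  have hn : ∃ n : V, G.Adj v n := by
    cases p0 with
    | nil => exact absurd rfl hu
    | cons h _ => exact ⟨_, h⟩
  obtain ⟨n, hvn⟩ := hn
  -- Step 3: every vertex is v, adjacent to all neighbors of v, or a neighbor of v
  have hW : ∀ z : V, z = v ∨ (∀ y, G.Adj v y → G.Adj z y) ∨ G.Adj v z := by
    intro z
    obtain ⟨p⟩ := hconn.preconnected v z
    refine mem_of_walk_closed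
      (M := {x : V | x = v ∨ (∀ y, G.Adj v y → G.Adj x y) ∨ G.Adj v x}) ?_ p (Or.inl rfl)
    intro x z hx hxz
    by_cases hvz : G.Adj v z
    · exact Or.inr (Or.inr hvz)
    by_cases hzv : z = v
    · exact Or.inl hzv
    refine Or.inr (Or.inl fun y hvy => ?_)
    by_contra hzy
    rcases hx with rfl | hx | hx
    · exact hvz hxz
    · -- x adjacent to all neighbors of v; induced P4: z - x - y - v
      have hxy : G.Adj x y := hx y hvy
      have hxv : ¬ G.Adj x v := fun h' => h1 x v y ⟨h', hvy, hxy⟩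
      exact hnoP4 z x y v
        ⟨hxz.ne', fun h => hvz (h ▸ hvy), hzv,
         fun h => hxv (h ▸ hvy).symm, fun h => hvz (h ▸ hxz), hvy.ne',
         hxz.symm, hxy, hvy.symm, hzy, hxv, fun h => hvz h.symm⟩
    · -- x a neighbor of v; induced P4: z - x - v - y
      exact hnoP4 z x v y
        ⟨hxz.ne', hzv, fun h => hvz (h ▸ hvy),
         hx.ne', fun h => hzy (h ▸ hxz.symm), hvy.ne,
         hxz.symm, hx.symm, hvy, fun h => hvz h.symm,
         fun h => h1 v x y ⟨hx, h, hvy⟩, hzy⟩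
  -- Step 4: M is closed under complement adjacency and separates v from n
  have hMclosed : ∀ ⦃x z : V⦄,
      x ∈ {x : V | x = v ∨ ∀ y, G.Adj v y → G.Adj x y} → (Gᶜ).Adj x z →
      z ∈ {x : V | x = v ∨ ∀ y, G.Adj v y → G.Adj x y} := by
    intro x z hx hxz
    rw [SimpleGraph.compl_adj] at hxz
    rcases hW z with rfl | hz | hz
    · exact Or.inl rfl
    · exact Or.inr hz
    · exfalso
      rcases hx with rfl | hx
      · exact hxz.2 hz
      · exact hxz.2 (hx z hz)
  obtain ⟨q⟩ := hcompl.preconnected v n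
  have hnM := mem_of_walk_closed hMclosed q (Or.inl rfl)
  rcases hnM with rfl | hnM
  · exact hvn.ne rfl
  · exact G.irrefl (hnM n hvn)
end

section
/- Let G be a finite simple graph and let F be an editing set of G of minimum cardinality (i.e., no editing set of G has fewer elements). Then for every pair (u,v) ∈ F, the vertices u and v belong to the same connected component of G. -/
open SimpleGraph

private lemma editGraph_adj' {V : Type*} (G : SimpleGraph V) (F : Set (Sym2 V)) (a b : V) :
    (editGraph G F).Adj a b ↔ s(a,b) ∈ symmDiff G.edgeSet F ∧ a ≠ b :=
  SimpleGraph.fromEdgeSet_adj _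

private lemma reach_of_reach {V : Type*} {G H : SimpleGraph V}
    (h : ∀ a b, H.Adj a b → G.Reachable a b) {a b : V} (hr : H.Reachable a b) :
    G.Reachable a b := by
  obtain ⟨w⟩ := hr
  induction w with
  | nil => exact Reachable.refl _
  | cons h' _ ih => exact (h _ _ h').trans ih

theorem min_editing_set_within_components
    {V : Type*} [Fintype V] (G : SimpleGraph V) (F : Set (Sym2 V))
    (hF : IsBiclusterGraph (editGraph G F))
    (hmin : ∀ F' : Set (Sym2 V), IsBiclusterGraph (editGraph G F') → F.ncard ≤ F'.ncard)
    (u v : V) (huv : s(u, v) ∈ F) : G.Reachable u v := by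
  classical
  by_contra hnr
  -- the restriction of F to pairs within the same G-component
  set F' : Set (Sym2 V) := {e | e ∈ F ∧ ∀ x ∈ e, ∀ y ∈ e, G.Reachable x y} with hF'def
  have hmm : ∀ a b : V, G.Reachable a b →
      ∀ x ∈ (s(a,b) : Sym2 V), ∀ y ∈ (s(a,b) : Sym2 V), G.Reachable x y := by
    intro a b hr x hx y hy
    rw [Sym2.mem_iff] at hx hy
    rcases hx with rfl | rfl <;> rcases hy with rfl | rfl
    exacts [Reachable.refl _, hr, hr.symm, Reachable.refl _]
  have hmemiff : ∀ a b : V, G.Reachable a b → ((s(a,b) : Sym2 V) ∈ F' ↔ s(a,b) ∈ F) := by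
    intro a b hr
    exact ⟨fun h => h.1, fun h => ⟨h, hmm a b hr⟩⟩
  have hAdj : ∀ a b, (editGraph G F').Adj a b ↔ (editGraph G F).Adj a b ∧ G.Reachable a b := by
    intro a b
    simp only [editGraph_adj', Set.mem_symmDiff]
    constructor
    · rintro ⟨h1, hne⟩
      rcases h1 with ⟨hg, hnF'⟩ | ⟨hF'm, hng⟩
      · have hr : G.Reachable a b := (G.mem_edgeSet.mp hg).reachable
        exact ⟨⟨Or.inl ⟨hg, fun h => hnF' ((hmemiff a b hr).mpr h)⟩, hne⟩, hr⟩
      · have hr : G.Reachable a b := hF'm.2 a (by simp) b (by simp)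
        exact ⟨⟨Or.inr ⟨hF'm.1, hng⟩, hne⟩, hr⟩
    · rintro ⟨⟨h1, hne⟩, hr⟩
      refine ⟨?_, hne⟩
      rcases h1 with ⟨hg, hn⟩ | ⟨hf, hn⟩
      · exact Or.inl ⟨hg, fun h => hn ((hmemiff a b hr).mp h)⟩
      · exact Or.inr ⟨(hmemiff a b hr).mpr hf, hn⟩
  have hsub_adj : editGraph G F' ≤ editGraph G F := fun {a b} h => ((hAdj a b).mp h).1
  have hKreach : ∀ a b, (editGraph G F').Adj a b → G.Reachable a b :=
    fun a b h => ((hAdj a b).mp h).2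
  -- F' is an editing set
  have hF'clust : IsBiclusterGraph (editGraph G F') := by
    intro v0 hcard
    set K : Set V := {u | (editGraph G F').Reachable v0 u} with hK
    set B : Set V := {u | (editGraph G F).Reachable v0 u} with hB
    have hKB : K ⊆ B := fun x hx => Reachable.mono hsub_adj hx
    have hBcard : 2 ≤ B.ncard := le_trans hcard (Set.ncard_le_ncard hKB (Set.toFinite B))
    obtain ⟨V1, V2, hun, hdisj, _, _, hind1, hind2, hcomp⟩ := hF v0 hBcard
    have hKreach2 : ∀ a ∈ K, ∀ b ∈ K, G.Reachable a b := by
      intro a ha b hb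
      have : (editGraph G F').Reachable a b := (Reachable.symm ha).trans hb
      exact reach_of_reach hKreach this
    have hedge : ∃ a b, a ∈ K ∧ b ∈ K ∧ (editGraph G F).Adj a b := by
      obtain ⟨w, hwK, hwv⟩ := Set.exists_ne_of_one_lt_ncard (by omega : 1 < K.ncard) v0
      obtain ⟨p⟩ := (hwK : (editGraph G F').Reachable v0 w)
      cases p with
      | nil => exact absurd rfl hwv
      | @cons _ x _ h q =>
        exact ⟨v0, x, Reachable.refl _, h.reachable, ((hAdj _ _).mp h).1⟩
    obtain ⟨a, b, haK, hbK, hab⟩ := hedge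
    have haB : a ∈ V1 ∪ V2 := by rw [hun]; exact hKB haK
    have hbB : b ∈ V1 ∪ V2 := by rw [hun]; exact hKB hbK
    have hside : (a ∈ V1 ∧ b ∈ V2) ∨ (a ∈ V2 ∧ b ∈ V1) := by
      rcases haB with ha1 | ha2 <;> rcases hbB with hb1 | hb2
      · exact absurd hab (hind1 a ha1 b hb1)
      · exact Or.inl ⟨ha1, hb2⟩
      · exact Or.inr ⟨ha2, hb1⟩
      · exact absurd hab (hind2 a ha2 b hb2)
    refine ⟨V1 ∩ K, V2 ∩ K, ?_, ?_, ?_, ?_, ?_, ?_, ?_⟩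
    · rw [← Set.union_inter_distrib_right, hun]
      exact Set.inter_eq_right.mpr hKB
    · exact hdisj.mono Set.inter_subset_left Set.inter_subset_left
    · rcases hside with ⟨h, _⟩ | ⟨_, h⟩
      exacts [⟨a, h, haK⟩, ⟨b, h, hbK⟩]
    · rcases hside with ⟨_, h⟩ | ⟨h, _⟩
      exacts [⟨b, h, hbK⟩, ⟨a, h, haK⟩]
    · intro x hx y hy hadj
      exact hind1 x hx.1 y hy.1 (((hAdj x y).mp hadj).1)
    · intro x hx y hy hadj
      exact hind2 x hx.1 y hy.1 (((hAdj x y).mp hadj).1)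
    · intro x hx y hy
      exact (hAdj x y).mpr ⟨hcomp x hx.1 y hy.1, hKreach2 x hx.2 y hy.2⟩
  -- F' is strictly smaller than F, contradiction
  have hnotin : (s(u,v) : Sym2 V) ∉ F' := by
    intro h
    exact hnr (h.2 u (by simp) v (by simp))
  have hlt : F'.ncard < F.ncard := by
    apply Set.ncard_lt_ncard _ (Set.toFinite F)
    rw [Set.ssubset_def]
    exact ⟨fun e he => he.1, fun hsub => hnotin (hsub huv)⟩
  exact absurd (hmin F' hF'clust) (not_le.mpr hlt)
end

section
/- A finite simple graph G is a bicluster graph if and only if G is bipartite and G contains no induced P4 (no set of four vertices inducing a path on 4 vertices). -/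
open SimpleGraph

private lemma fin2_aux (a b c : Fin 2) (h1 : a ≠ b) (h2 : a ≠ c) : b = c := by omega

/-- Key walk induction: in a 2-colored P4-free graph, differently colored
reachable vertices are adjacent, and same-colored distinct reachable vertices
have a common neighbor. -/
private lemma key_walk {V : Type*} {G : SimpleGraph V} (col : G.Coloring (Fin 2))
    (hP4 : ∀ a b c d : V, ¬ InducesP4 G a b c d) :
    ∀ {u w : V}, G.Walk u w →
      ((col u ≠ col w → G.Adj u w) ∧
       (col u = col w → u ≠ w → ∃ x, G.Adj u x ∧ G.Adj w x)) := by
  intro u w p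
  induction p with
  | nil => exact ⟨fun h => absurd rfl h, fun _ h => absurd rfl h⟩
  | @cons u x w h q ih =>
    have hux : col u ≠ col x := col.valid h
    constructor
    · intro huw
      by_cases hxw' : x = w
      · exact hxw' ▸ h
      · have hxw : col x = col w := fin2_aux _ _ _ hux huw
        obtain ⟨y, hxy, hwy⟩ := ih.2 hxw hxw'
        by_contra hnuw
        have huy : col u = col y := fin2_aux (col x) _ _ (Ne.symm hux) (col.valid hxy)
        have hnu_y : ¬ G.Adj u y := fun hadj => col.valid hadj huy
        have hnx_w : ¬ G.Adj x w := fun hadj => col.valid hadj hxw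
        refine hP4 u x y w ⟨h.ne, ?_, ?_, hxy.ne, hxw', hwy.ne', h, hxy, hwy.symm, hnu_y, hnx_w, hnuw⟩
        · intro he; exact hnuw (he ▸ hwy.symm)
        · intro he; exact huw (congrArg col he)
    · intro huw hne
      have hxwcol : col x ≠ col w := fun he => hux (huw.trans he.symm)
      have := ih.1 hxwcol
      exact ⟨x, h, this.symm⟩

theorem bicluster_iff_bipartite_p4_free
    {V : Type*} [Fintype V] (G : SimpleGraph V) :
    IsBiclusterGraph G ↔ G.Colorable 2 ∧ ∀ a b c d : V, ¬ InducesP4 G a b c d := by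
  constructor
  · intro hB
    constructor
    · -- build a 2-coloring
      classical
      set rep : V → V := fun v => (G.connectedComponentMk v).out with hrep
      have hrepreach : ∀ v : V, G.Reachable (rep v) v := by
        intro v
        exact (SimpleGraph.ConnectedComponent.eq).1 ((G.connectedComponentMk v).out_eq)
      set f : V → Fin 2 := fun v =>
        if h : 2 ≤ ({u | G.Reachable (rep v) u}).ncard then
          (if v ∈ (hB (rep v) h).choose then 0 else 1)
        else 0 with hf
      refine ⟨SimpleGraph.Coloring.mk f ?_⟩
      intro a b hab
      have hrepeq : rep a = rep b := by
        have : G.connectedComponentMk a = G.connectedComponentMk b :=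
          (SimpleGraph.ConnectedComponent.eq).2 hab.reachable
        simp [rep, this]
      have hSn : 2 ≤ ({u | G.Reachable (rep a) u}).ncard := by
        have h1 : a ∈ {u | G.Reachable (rep a) u} := hrepreach a
        have h2 : b ∈ {u | G.Reachable (rep a) u} := hrepeq ▸ hrepreach b
        have := (Set.one_lt_ncard (Set.toFinite _)).2 ⟨a, h1, b, h2, hab.ne⟩
        omega
      obtain ⟨V2, hun, hdisj, -, -, hI1, hI2, -⟩ := (hB (rep a) hSn).choose_spec
      set V1 := (hB (rep a) hSn).choose with hV1
      have ha : a ∈ V1 ∪ V2 := by rw [hun]; exact hrepreach a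
      have hb : b ∈ V1 ∪ V2 := by rw [hun]; exact hrepeq ▸ hrepreach b
      have hfa : f a = if a ∈ V1 then 0 else 1 := by
        simp only [hf]
        rw [dif_pos hSn]
      have hfb : f b = if b ∈ V1 then 0 else 1 := by
        simp only [hf]
        have e : rep b = rep a := hrepeq.symm
        simp only [e]
        rw [dif_pos hSn]
      intro hcol
      rw [hfa, hfb] at hcol
      by_cases haV1 : a ∈ V1 <;> by_cases hbV1 : b ∈ V1
      · exact hI1 a haV1 b hbV1 hab
      · simp [haV1, hbV1] at hcol
      · simp [haV1, hbV1] at hcol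
      · have ha2 : a ∈ V2 := ha.resolve_left haV1
        have hb2 : b ∈ V2 := hb.resolve_left hbV1
        exact hI2 a ha2 b hb2 hab
    · -- P4-free
      intro a b c d hp
      obtain ⟨hab, hac, had, hbc, hbd, hcd, Hab, Hbc, Hcd, Nac, Nbd, Nad⟩ := hp
      have hSn : 2 ≤ ({u | G.Reachable a u}).ncard := by
        have := (Set.one_lt_ncard (Set.toFinite {u | G.Reachable a u})).2
          ⟨a, Reachable.refl a, b, Hab.reachable, hab⟩
        omega
      obtain ⟨V1, V2, hun, hdisj, -, -, hI1, hI2, hE⟩ := hB a hSn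
      have ma : a ∈ V1 ∪ V2 := by rw [hun]; exact Reachable.refl a
      have mb : b ∈ V1 ∪ V2 := by rw [hun]; exact Hab.reachable
      have mc : c ∈ V1 ∪ V2 := by rw [hun]; exact Hab.reachable.trans Hbc.reachable
      have md : d ∈ V1 ∪ V2 := by
        rw [hun]; exact (Hab.reachable.trans Hbc.reachable).trans Hcd.reachable
      rcases ma with ha1 | ha2
      · have hb2 : b ∈ V2 := mb.resolve_left (fun h => hI1 a ha1 b h Hab)
        have hc1 : c ∈ V1 := mc.resolve_right (fun h => Nac (hE a ha1 c h))
        have hd2 : d ∈ V2 := md.resolve_left (fun h => hI1 c hc1 d h Hcd)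
        exact Nad (hE a ha1 d hd2)
      · have hb1 : b ∈ V1 := mb.resolve_right (fun h => hI2 a ha2 b h Hab)
        have hc2 : c ∈ V2 := mc.resolve_left (fun h => Nac ((hE c h a ha2).symm))
        have hd1 : d ∈ V1 := md.resolve_right (fun h => hI2 c hc2 d h Hcd)
        exact Nad ((hE d hd1 a ha2).symm)
  · rintro ⟨⟨col⟩, hP4⟩
    intro v hn
    classical
    set C := {u | G.Reachable v u} with hC
    have hvC : v ∈ C := Reachable.refl v
    obtain ⟨a, haC, b, hbC, hne⟩ := (Set.one_lt_ncard (Set.toFinite C)).1 (by omega)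
    have hexu : ∃ u ∈ C, u ≠ v := by
      by_cases h : a = v
      · exact ⟨b, hbC, fun he => hne (h ▸ he ▸ rfl)⟩
      · exact ⟨a, haC, h⟩
    obtain ⟨u, huC, huv⟩ := hexu
    -- v has a neighbor
    obtain ⟨p⟩ := (huC : G.Reachable v u)
    have hnbr : ∃ n0, G.Adj v n0 := by
      cases p with
      | nil => exact absurd rfl (Ne.symm huv)
      | cons h q => exact ⟨_, h⟩
    obtain ⟨n0, hn0⟩ := hnbr
    refine ⟨{x ∈ C | col x = col v}, {x ∈ C | col x ≠ col v}, ?_, ?_, ?_, ?_, ?_, ?_, ?_⟩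
    · ext x
      simp only [Set.mem_union, Set.mem_setOf_eq, Set.mem_sep_iff]
      constructor
      · rintro (⟨h, -⟩ | ⟨h, -⟩) <;> exact h
      · intro h
        by_cases hc : col x = col v
        · exact Or.inl ⟨h, hc⟩
        · exact Or.inr ⟨h, hc⟩
    · rw [Set.disjoint_left]
      rintro x ⟨-, h1⟩ ⟨-, h2⟩
      exact h2 h1
    · exact ⟨v, hvC, rfl⟩
    · exact ⟨n0, hn0.reachable, (col.valid hn0).symm⟩
    · rintro x ⟨-, hx⟩ y ⟨-, hy⟩ hadj
      exact col.valid hadj (hx.trans hy.symm)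
    · rintro x ⟨-, hx⟩ y ⟨-, hy⟩ hadj
      exact col.valid hadj (fin2_aux (col v) _ _ (Ne.symm hx) (Ne.symm hy))
    · rintro x ⟨hxC, hx⟩ y ⟨hyC, hy⟩
      have hreach : G.Reachable x y := (hxC : G.Reachable v x).symm.trans hyC
      obtain ⟨q⟩ := hreach
      exact (key_walk col hP4 q).1 (fun he => hy (he ▸ hx))
end

section
/- Let G be a finite simple graph, let F be an editing set of G, and let S be any subset of the vertices of G. Then the set F' = {(u,v) ∈ F : u ∈ S and v ∈ S} is an editing set of the induced subgraph G[S]. -/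
open SimpleGraph

lemma editGraph_induce {V : Type*} (G : SimpleGraph V) (F : Set (Sym2 V)) (S : Set V) :
    editGraph (G.induce S) (Sym2.map (Subtype.val : S → V) ⁻¹' F)
      = (editGraph G F).induce S := by
  ext a b
  have hne : a ≠ b ↔ (a : V) ≠ (b : V) := by
    constructor
    · intro h h'; exact h (Subtype.ext h')
    · intro h h'; exact h (congrArg Subtype.val h')
  simp only [editGraph, fromEdgeSet_adj, Set.mem_preimage, Sym2.map_pair_eq,
    symmDiff_def, Set.mem_union, Set.mem_diff, mem_edgeSet, comap_adj,
    Function.Embedding.coe_subtype, hne]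
  tauto

lemma induce_bicluster {V : Type*} [Fintype V] (H : SimpleGraph V) (S : Set V)
    (hH : ∀ v : V, 2 ≤ ({u | H.Reachable v u}).ncard →
      ∃ V1 V2 : Set V, V1 ∪ V2 = {u | H.Reachable v u} ∧ Disjoint V1 V2 ∧ V1.Nonempty ∧ V2.Nonempty ∧
        (∀ a ∈ V1, ∀ b ∈ V1, ¬ H.Adj a b) ∧ (∀ a ∈ V2, ∀ b ∈ V2, ¬ H.Adj a b) ∧
        (∀ a ∈ V1, ∀ b ∈ V2, H.Adj a b)) :
    ∀ v : S, 2 ≤ ({u | (H.induce S).Reachable v u}).ncard →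
      ∃ V1 V2 : Set S, V1 ∪ V2 = {u | (H.induce S).Reachable v u} ∧ Disjoint V1 V2 ∧
        V1.Nonempty ∧ V2.Nonempty ∧
        (∀ a ∈ V1, ∀ b ∈ V1, ¬ (H.induce S).Adj a b) ∧
        (∀ a ∈ V2, ∀ b ∈ V2, ¬ (H.induce S).Adj a b) ∧
        (∀ a ∈ V1, ∀ b ∈ V2, (H.induce S).Adj a b) := by
  intro v hv
  have hmap : ∀ {a b : S}, (H.induce S).Reachable a b → H.Reachable a.val b.val := by
    intro a b h
    exact h.map (SimpleGraph.Embedding.induce S).toHom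
  set C : Set S := {u | (H.induce S).Reachable v u} with hC
  -- find a neighbor w of v within the induced graph
  obtain ⟨u, hu, hunev⟩ : ∃ u ∈ C, u ≠ v := Set.exists_ne_of_one_lt_ncard hv v
  obtain ⟨p⟩ := hu
  obtain ⟨w, hvw, hwreach⟩ : ∃ w : S, (H.induce S).Adj v w ∧ w ∈ C := by
    cases p with
    | nil => exact absurd rfl hunev.symm
    | cons h q => exact ⟨_, h, h.reachable⟩
  have hvw' : H.Adj v.val w.val := hvw
  have hD2 : 2 ≤ ({u | H.Reachable v.val u}).ncard := by
    exact (Set.one_lt_ncard (Set.toFinite _)).mpr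
      ⟨v.val, Reachable.refl _, w.val, hvw'.reachable, hvw'.ne⟩
  obtain ⟨W1, W2, hUnion, hDisj, h1ne, h2ne, hI1, hI2, hE⟩ := hH v.val hD2
  clear hv hunev p hD2 h1ne h2ne
  have key : ∀ W1 W2 : Set V, W1 ∪ W2 = {u | H.Reachable v.val u} → Disjoint W1 W2 →
      (∀ a ∈ W1, ∀ b ∈ W1, ¬ H.Adj a b) → (∀ a ∈ W2, ∀ b ∈ W2, ¬ H.Adj a b) →
      (∀ a ∈ W1, ∀ b ∈ W2, H.Adj a b) → v.val ∈ W1 →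
      ∃ V1 V2 : Set S, V1 ∪ V2 = C ∧ Disjoint V1 V2 ∧
        V1.Nonempty ∧ V2.Nonempty ∧
        (∀ a ∈ V1, ∀ b ∈ V1, ¬ (H.induce S).Adj a b) ∧
        (∀ a ∈ V2, ∀ b ∈ V2, ¬ (H.induce S).Adj a b) ∧
        (∀ a ∈ V1, ∀ b ∈ V2, (H.induce S).Adj a b) := by
    intro W1 W2 hUnion hDisj hI1 hI2 hE hvW1
    refine ⟨{x : S | x ∈ C ∧ x.val ∈ W1}, {x : S | x ∈ C ∧ x.val ∈ W2}, ?_, ?_, ?_, ?_, ?_, ?_, ?_⟩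
    · apply Set.Subset.antisymm
      · rintro x (⟨hx, _⟩ | ⟨hx, _⟩) <;> exact hx
      · intro x hx
        have : x.val ∈ W1 ∪ W2 := hUnion ▸ hmap hx
        rcases this with h | h
        · exact Or.inl ⟨hx, h⟩
        · exact Or.inr ⟨hx, h⟩
    · rw [Set.disjoint_left]
      rintro x ⟨_, h1⟩ ⟨_, h2⟩
      exact Set.disjoint_left.mp hDisj h1 h2
    · exact ⟨v, Reachable.refl _, hvW1⟩
    · refine ⟨w, hwreach, ?_⟩
      have : w.val ∈ W1 ∪ W2 := hUnion ▸ hmap hwreach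
      rcases this with h | h
      · exact absurd hvw' (hI1 _ hvW1 _ h)
      · exact h
    · rintro a ⟨_, ha⟩ b ⟨_, hb⟩ hab
      exact hI1 _ ha _ hb hab
    · rintro a ⟨_, ha⟩ b ⟨_, hb⟩ hab
      exact hI2 _ ha _ hb hab
    · rintro a ⟨_, ha⟩ b ⟨_, hb⟩
      exact hE _ ha _ hb
  have hvD : v.val ∈ W1 ∪ W2 := hUnion ▸ Reachable.refl _
  rcases hvD with h | h
  · exact key W1 W2 hUnion hDisj hI1 hI2 hE h
  · exact key W2 W1 (Set.union_comm _ _ ▸ hUnion) hDisj.symm hI2 hI1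
      (fun a ha b hb => (hE b hb a ha).symm) h

theorem editing_set_restrict
    {V : Type*} [Fintype V] (G : SimpleGraph V) (F : Set (Sym2 V)) (S : Set V)
    (hF : IsBiclusterGraph (editGraph G F)) :
    IsBiclusterGraph
      (editGraph (G.induce S) (Sym2.map (Subtype.val : S → V) ⁻¹' F)) := by
  rw [editGraph_induce]
  exact induce_bicluster (editGraph G F) S (fun v hv => hF v hv)
end

section
/- Let G be a finite simple graph and let A be a set of four vertices that induces a P4 in G. Then every editing set F of G contains at least one pair (u,v) with both u ∈ A and v ∈ A. -/
open SimpleGraph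

theorem editing_set_hits_p4
    {V : Type*} [Fintype V] (G : SimpleGraph V) (a b c d : V)
    (hP4 : InducesP4 G a b c d)
    (F : Set (Sym2 V)) (hF : IsBiclusterGraph (editGraph G F)) :
    ∃ u v : V, u ∈ ({a, b, c, d} : Set V) ∧ v ∈ ({a, b, c, d} : Set V) ∧
      s(u, v) ∈ F := by
  by_contra h
  push_neg at h
  obtain ⟨hab, hac, had, hbc, hbd, hcd, Gab, Gbc, Gcd, nGac, nGbd, nGad⟩ := hP4
  set H := editGraph G F with hH
  have key : ∀ u v : V, u ∈ ({a,b,c,d} : Set V) → v ∈ ({a,b,c,d} : Set V) →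
      (H.Adj u v ↔ G.Adj u v) := by
    intro u v hu hv
    have hnF : s(u,v) ∉ F := h u v hu hv
    constructor
    · intro huv
      have h1 := ((SimpleGraph.fromEdgeSet_adj _).mp huv).1
      rcases (Set.mem_symmDiff.mp h1) with ⟨hm, _⟩ | ⟨hm, _⟩
      · exact hm
      · exact absurd hm hnF
    · intro huv
      exact (SimpleGraph.fromEdgeSet_adj _).mpr
        ⟨Set.mem_symmDiff.mpr (Or.inl ⟨huv, hnF⟩), huv.ne⟩
  have ma : a ∈ ({a,b,c,d} : Set V) := by simp
  have mb : b ∈ ({a,b,c,d} : Set V) := by simp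
  have mc : c ∈ ({a,b,c,d} : Set V) := by simp
  have md : d ∈ ({a,b,c,d} : Set V) := by simp
  have Hab : H.Adj a b := (key a b ma mb).mpr Gab
  have Hbc : H.Adj b c := (key b c mb mc).mpr Gbc
  have Hcd : H.Adj c d := (key c d mc md).mpr Gcd
  have nHad : ¬ H.Adj a d := fun hAd => nGad ((key a d ma md).mp hAd)
  set S : Set V := {u | H.Reachable a u} with hS
  have haS : a ∈ S := ⟨SimpleGraph.Walk.nil⟩
  have hbS : b ∈ S := Hab.reachable
  have hcS : c ∈ S := Hab.reachable.trans Hbc.reachable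
  have hdS : d ∈ S := (Hab.reachable.trans Hbc.reachable).trans Hcd.reachable
  have hcard : 2 ≤ S.ncard := by
    have : 1 < S.ncard := (Set.one_lt_ncard S.toFinite).mpr ⟨a, haS, b, hbS, hab⟩
    omega
  obtain ⟨V1, V2, hUn, hDisj, _, _, hI1, hI2, hCross⟩ := hF a hcard
  have hmem : ∀ u, u ∈ S → u ∈ V1 ∪ V2 := fun u hu => hUn ▸ hu
  have d1 : ∀ u, u ∈ V1 → u ∉ V2 := fun u h1 h2 => hDisj.ne_of_mem h1 h2 rfl
  have d2 : ∀ u, u ∈ V2 → u ∉ V1 := fun u h2 h1 => hDisj.ne_of_mem h1 h2 rfl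
  rcases hmem a haS with ha1 | ha2
  · have hb2 : b ∈ V2 := by
      rcases hmem b hbS with hb1 | hb2
      · exact absurd Hab (hI1 a ha1 b hb1)
      · exact hb2
    have hc1 : c ∈ V1 := by
      rcases hmem c hcS with hc1 | hc2
      · exact hc1
      · exact absurd (Hbc.symm) (hI2 c hc2 b hb2)
    have hd2 : d ∈ V2 := by
      rcases hmem d hdS with hd1 | hd2
      · exact absurd Hcd (hI1 c hc1 d hd1)
      · exact hd2
    exact nHad (hCross a ha1 d hd2)
  · have hb1 : b ∈ V1 := by
      rcases hmem b hbS with hb1 | hb2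
      · exact hb1
      · exact absurd Hab (hI2 a ha2 b hb2)
    have hc2 : c ∈ V2 := by
      rcases hmem c hcS with hc1 | hc2
      · exact absurd Hbc (hI1 b hb1 c hc1)
      · exact hc2
    have hd1 : d ∈ V1 := by
      rcases hmem d hdS with hd1 | hd2
      · exact hd1
      · exact absurd Hcd (hI2 c hc2 d hd2)
    exact nHad ((hCross d hd1 a ha2).symm)
end
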